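/- Let R be a commutative ring with total quotient ring T. Then the complete integral closure satisfies R̂ = ⋃_{I} (I :_T I), where I ranges over all regular fractional divisorial ideals of R. Moreover, if the conductor (R : R̂) is regular, then R̂ is itself a regular fractional divisorial ideal of R. -/

import Mathlib

open scoped Pointwise

/-- For subsets `Z, X` of the total quotient ring `T`, the colon set
`(Z : X) = {a ∈ T | a X ⊆ Z}`. -/
def colonSet (T : Type*) [CommRing T] (Z X : Set T) : Set T :=
  {a : T | ∀ x ∈ X, a * x ∈ Z}

/-- The image of `R` inside its total quotient ring `T`. -/
def ringSet (R T : Type*) [CommRing R] [CommRing T] [Algebra R T] : Set T :=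
  Set.range (algebraMap R T)

/-- `X⁻¹ = (R : X)` for a subset `X ⊆ T`. -/
def invSet (R T : Type*) [CommRing R] [CommRing T] [Algebra R T] (X : Set T) : Set T :=
  colonSet T (ringSet R T) X

/-- The divisorial (v-) closure `X_v = (X⁻¹)⁻¹` of a subset `X ⊆ T`. -/
def vSet (R T : Type*) [CommRing R] [CommRing T] [Algebra R T] (X : Set T) : Set T :=
  invSet R T (invSet R T X)

/-- The set of regular elements (non-zero-divisors) of `T`. -/
def regSet (T : Type*) [CommRing T] : Set T :=
  {t : T | t ∈ nonZeroDivisors T}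

/-- The colon set computed inside `Q = T^• ` : `(Z :_Q X) = {a ∈ Q | a X ⊆ Z}`. -/
def colonQ (T : Type*) [CommRing T] (Z X : Set T) : Set T :=
  {a : T | a ∈ nonZeroDivisors T ∧ ∀ x ∈ X, a * x ∈ Z}

/-- The monoid `H = R^•` of regular elements of `R`, viewed inside `T`. -/
def HSet (R T : Type*) [CommRing R] [CommRing T] [Algebra R T] : Set T :=
  ringSet R T ∩ regSet T

/-- The v-closure of a subset of `Q = T^•` with respect to the monoid `H = R^•`. -/
def vMon (R T : Type*) [CommRing R] [CommRing T] [Algebra R T] (X : Set T) : Set T :=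
  colonQ T (HSet R T) (colonQ T (HSet R T) X)

/-- `X ⊆ T` is `R`-fractional: `cX ⊆ R` for some regular `c ∈ R^•`. -/
def isFrac (R T : Type*) [CommRing R] [CommRing T] [Algebra R T] (X : Set T) : Prop :=
  ∃ c : R, c ∈ nonZeroDivisors R ∧ ∀ x ∈ X, algebraMap R T c * x ∈ ringSet R T

/-- The complete integral closure `R̂` of `R` in `T`. -/
def hatSet (R T : Type*) [CommRing R] [CommRing T] [Algebra R T] : Set T :=
  {x : T | ∃ c : R, c ∈ nonZeroDivisors R ∧
    ∀ n : ℕ, 1 ≤ n → algebraMap R T c * x ^ n ∈ ringSet R T}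

/-- The complete integral closure `Ĥ` of the monoid `H = R^•` in `q(H) = T^•`. -/
def monHat (R T : Type*) [CommRing R] [CommRing T] [Algebra R T] : Set T :=
  {x : T | x ∈ nonZeroDivisors T ∧
    ∃ c ∈ HSet R T, ∀ n : ℕ, 1 ≤ n → c * x ^ n ∈ HSet R T}

/-- `R` is a v-Marot ring: every regular fractional divisorial ideal is
v-generated by its regular elements. -/
def isVMarot (R T : Type*) [CommRing R] [CommRing T] [Algebra R T] : Prop :=
  ∀ I : Set T, (I ∩ regSet T).Nonempty → isFrac R T I → vSet R T I = I →
    I = vSet R T (I ∩ regSet T)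

/-!
If `x ∈ R̂`, say `c xⁿ ∈ R` for all `n`, then `x` stabilises the set `{c xⁿ}`, hence also its
v-closure `I`, which is a regular divisorial ideal contained in `R`. Conversely, if `x I ⊆ I` for a
regular fractional ideal `I` with `c I ⊆ R` and `t ∈ I` regular, then `(c t) xⁿ ∈ c I ⊆ R` for all
`n`. For the second claim, let `d` be a regular element of the conductor `(R : R̂)`. Then `R̂` is
fractional via `d`, and since `(R : R̂)` is an `R̂`-module, every `y ∈ (R̂)_v` stabilises it, so
`d yⁿ ∈ (R : R̂) ⊆ R` and `y ∈ R̂`.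
-/

section ColonSets

variable {T : Type*} [CommRing T]

theorem pow_mul_mem_of_mem_colonSet {I : Set T} {a t : T} (ha : a ∈ colonSet T I I)
    (ht : t ∈ I) (n : ℕ) : a ^ n * t ∈ I := by
  induction n with
  | zero => simpa using ht
  | succ n ih => simpa only [pow_succ', mul_assoc] using ha _ ih

variable (R : Type*) [CommRing R] [Algebra R T]

theorem one_mem_ringSet : (1 : T) ∈ ringSet R T := ⟨1, map_one _⟩

theorem invSet_antitone {X Y : Set T} (h : X ⊆ Y) : invSet R T Y ⊆ invSet R T X :=
  fun _ ha x hx => ha x (h hx)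

theorem subset_vSet (X : Set T) : X ⊆ vSet R T X := fun x hx a ha => by
  rw [mul_comm]
  exact ha x hx

theorem invSet_vSet (X : Set T) : invSet R T (vSet R T X) = invSet R T X :=
  (invSet_antitone R (subset_vSet R X)).antisymm (subset_vSet R (invSet R T X))

theorem vSet_vSet (X : Set T) : vSet R T (vSet R T X) = vSet R T X :=
  congrArg (invSet R T) (invSet_vSet R X)

theorem one_mem_invSet_iff {X : Set T} : (1 : T) ∈ invSet R T X ↔ X ⊆ ringSet R T := by
  simp only [invSet, colonSet, one_mul, Set.mem_ofPred_eq, Set.subset_def]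

theorem mem_colonSet_invSet {X : Set T} {a : T} (ha : a ∈ colonSet T X X) :
    a ∈ colonSet T (invSet R T X) (invSet R T X) := fun b hb x hx => by
  rw [mul_comm a, mul_assoc]
  exact hb _ (ha x hx)

theorem mem_colonSet_vSet {X : Set T} {a : T} (ha : a ∈ colonSet T X X) :
    a ∈ colonSet T (vSet R T X) (vSet R T X) :=
  mem_colonSet_invSet R (mem_colonSet_invSet R ha)

theorem vSet_subset_colonSet_invSet {A : Set T} (hA : ∀ a ∈ A, ∀ b ∈ A, a * b ∈ A) :
    vSet R T A ⊆ colonSet T (invSet R T A) (invSet R T A) := fun y hy t ht a ha => by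
  rw [mul_assoc]
  exact hy _ fun b hb => by
    rw [mul_assoc]
    exact ht _ (hA a ha b hb)

theorem mem_ringSet_of_mem_invSet {X : Set T} {d : T} (hX : (1 : T) ∈ X)
    (hd : d ∈ invSet R T X) : d ∈ ringSet R T := by
  simpa using hd 1 hX

end ColonSets

section CompleteIntegralClosure

variable (R T : Type*) [CommRing R] [CommRing T] [Algebra R T]

theorem one_mem_hatSet : (1 : T) ∈ hatSet R T :=
  ⟨1, one_mem _, fun n _ => by simpa using one_mem_ringSet R⟩

theorem mul_mem_hatSet {x y : T} (hx : x ∈ hatSet R T) (hy : y ∈ hatSet R T) :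
    x * y ∈ hatSet R T := by
  obtain ⟨c, hc, hcx⟩ := hx
  obtain ⟨e, he, hey⟩ := hy
  refine ⟨c * e, mul_mem hc he, fun n hn => ?_⟩
  obtain ⟨u, hu⟩ := hcx n hn
  obtain ⟨v, hv⟩ := hey n hn
  exact ⟨u * v, by rw [map_mul, map_mul, hu, hv, mul_pow]; ring⟩

variable {R T} [IsFractionRing R T]

theorem algebraMap_mem_nonZeroDivisors {c : R} (hc : c ∈ nonZeroDivisors R) :
    algebraMap R T c ∈ nonZeroDivisors T :=
  IsLocalization.nonZeroDivisors_le_comap (nonZeroDivisors R) T hc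

theorem mem_nonZeroDivisors_of_algebraMap {c : R} (h : algebraMap R T c ∈ nonZeroDivisors T) :
    c ∈ nonZeroDivisors R :=
  mem_nonZeroDivisors_of_injective (IsFractionRing.injective R T) h

theorem isFrac_of_mem_invSet {X : Set T} {d : T} (hdR : d ∈ ringSet R T) (hd : d ∈ invSet R T X)
    (hreg : d ∈ nonZeroDivisors T) : isFrac R T X := by
  obtain ⟨c, rfl⟩ := hdR
  exact ⟨c, mem_nonZeroDivisors_of_algebraMap hreg, hd⟩

theorem mem_hatSet_of_mul_pow_mem {d y : T} (hdR : d ∈ ringSet R T)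
    (hreg : d ∈ nonZeroDivisors T) (h : ∀ n : ℕ, d * y ^ n ∈ ringSet R T) : y ∈ hatSet R T := by
  obtain ⟨c, rfl⟩ := hdR
  exact ⟨c, mem_nonZeroDivisors_of_algebraMap hreg, fun n _ => h n⟩

theorem colonSet_subset_hatSet {I : Set T} (hreg : (I ∩ regSet T).Nonempty)
    (hfrac : isFrac R T I) : colonSet T I I ⊆ hatSet R T := by
  obtain ⟨t, ht, htreg⟩ := hreg
  obtain ⟨c, hc, hcI⟩ := hfrac
  intro a ha
  refine mem_hatSet_of_mul_pow_mem (hcI t ht)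
    (mul_mem (algebraMap_mem_nonZeroDivisors hc) htreg) fun n => ?_
  rw [mul_assoc, mul_comm t]
  exact hcI _ (pow_mul_mem_of_mem_colonSet ha ht n)

theorem exists_vSet_eq_of_mem_hatSet {x : T} (hx : x ∈ hatSet R T) :
    ∃ I : Set T, (I ∩ regSet T).Nonempty ∧ isFrac R T I ∧ vSet R T I = I ∧
      x ∈ colonSet T I I := by
  obtain ⟨c, hc, hpow⟩ := hx
  set B : Set T := Set.range fun n : ℕ => algebraMap R T c * x ^ n
  have hcB : algebraMap R T c ∈ B := ⟨0, by simp⟩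
  have hBR : B ⊆ ringSet R T := by
    rintro _ ⟨_ | n, rfl⟩
    · exact ⟨c, by simp⟩
    · exact hpow _ n.succ_pos
  have hxB : x ∈ colonSet T B B := by
    rintro _ ⟨n, rfl⟩
    exact ⟨n + 1, by ring⟩
  have hone : (1 : T) ∈ invSet R T (vSet R T B) := by
    rw [invSet_vSet, one_mem_invSet_iff]
    exact hBR
  exact ⟨vSet R T B, ⟨_, subset_vSet R B hcB, algebraMap_mem_nonZeroDivisors hc⟩,
    isFrac_of_mem_invSet (one_mem_ringSet R) hone (one_mem _), vSet_vSet R B,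
    mem_colonSet_vSet R hxB⟩

theorem vSet_hatSet_subset {d : T} (hd : d ∈ invSet R T (hatSet R T))
    (hreg : d ∈ nonZeroDivisors T) : vSet R T (hatSet R T) ⊆ hatSet R T := by
  intro y hy
  have hy' := vSet_subset_colonSet_invSet R (fun _ ha _ hb => mul_mem_hatSet R T ha hb) hy
  refine mem_hatSet_of_mul_pow_mem (mem_ringSet_of_mem_invSet R (one_mem_hatSet R T) hd) hreg
    fun n => ?_
  simpa [mul_comm] using pow_mul_mem_of_mem_colonSet hy' hd n 1 (one_mem_hatSet R T)

end CompleteIntegralClosure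

theorem stmt18 (R T : Type*) [CommRing R] [CommRing T] [Algebra R T] [IsFractionRing R T] :
    hatSet R T = ⋃₀ {S : Set T | ∃ I : Set T, (I ∩ regSet T).Nonempty ∧ isFrac R T I ∧
        vSet R T I = I ∧ S = colonSet T I I} ∧
      ((colonSet T (ringSet R T) (hatSet R T) ∩ regSet T).Nonempty →
        (hatSet R T ∩ regSet T).Nonempty ∧ isFrac R T (hatSet R T) ∧
          vSet R T (hatSet R T) = hatSet R T) := by
  refine ⟨Set.ext fun x => ⟨fun hx => ?_, ?_⟩, ?_⟩
  · obtain ⟨I, hreg, hfrac, hv, hxI⟩ := exists_vSet_eq_of_mem_hatSet hx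
    exact ⟨_, ⟨I, hreg, hfrac, hv, rfl⟩, hxI⟩
  · rintro ⟨_, ⟨I, hreg, hfrac, -, rfl⟩, hx⟩
    exact colonSet_subset_hatSet hreg hfrac hx
  · rintro ⟨d, hd, hdreg⟩
    have hdR := mem_ringSet_of_mem_invSet R (one_mem_hatSet R T) hd
    exact ⟨⟨1, one_mem_hatSet R T, one_mem (nonZeroDivisors T)⟩, isFrac_of_mem_invSet hdR hd hdreg,
      (vSet_hatSet_subset hd hdreg).antisymm (subset_vSet R _)⟩
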